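/- Let 1 ≤ k ≤ n and let R be a run of an n-DPDA that is not (k−1)-upper. Suppose the greatest index j ∈ [0,|R|−1] such that R[j,|R|] is k-upper exists and the prefix R[0,j] is (k−1)-upper. Then R is a k-return. -/

import Mathlib

namespace HOPDA

/-- Iterated exponentiation `pow` from the paper:
`pow [] = 1`, `pow (m :: l) = (1 + m) ^ pow l - 1`. -/
def pow : List ℕ → ℕ
  | [] => 1
  | m :: l => (1 + m) ^ pow l - 1

/-! ### Higher-order stacks.

Stacks are represented positionlessly (nested lists of symbols); the positions of the
paper are represented by *addresses*: lists of bottom-based indices leading from the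
outermost level into the stack.  Equality of contents is positionless equality `≅`. -/

inductive St (Γ : Type) : Type where
  | leaf (γ : Γ) : St Γ
  | node (l : List (St Γ)) : St Γ

/-- `IsValid k s` : `s` is a stack of order `k` all of whose component stacks are nonempty. -/
def IsValid {Γ : Type} : ℕ → St Γ → Prop
  | 0, St.leaf _ => True
  | 0, St.node _ => False
  | _ + 1, St.leaf _ => False
  | k + 1, St.node l => l ≠ [] ∧ ∀ t ∈ l, IsValid k t

/-- The address of the topmost substack `d` levels below the surface
(indices count from the bottom of each stack, as the positions in the paper do). -/
def topAddr {Γ : Type} : St Γ → ℕ → List ℕ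
  | _, 0 => []
  | St.leaf _, _ + 1 => []
  | St.node l, d + 1 => (l.length - 1) :: topAddr (l.getLastD (St.node [])) d

/-- The substack sitting at a given address. -/
def sub? {Γ : Type} : St Γ → List ℕ → Option (St Γ)
  | s, [] => some s
  | St.leaf _, _ :: _ => none
  | St.node l, i :: p =>
      match l[i]? with
      | some t => sub? t p
      | none => none

/-- Modify the substack at a given address. -/
def modAt {Γ : Type} : St Γ → List ℕ → (St Γ → Option (St Γ)) → Option (St Γ)
  | s, [], f => f s
  | St.leaf _, _ :: _, _ => none
  | St.node l, i :: p, f =>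
      match l[i]? with
      | none => none
      | some t =>
          match modAt t p f with
          | none => none
          | some t' => some (St.node (l.set i t'))

/-- The topmost stack symbol of an order-`n` stack. -/
def topLeaf? {Γ : Type} (n : ℕ) (s : St Γ) : Option Γ :=
  match sub? s (topAddr s n) with
  | some (St.leaf γ) => some γ
  | _ => none

/-- The content of the topmost `k`-stack of an order-`n` stack (`top^k`);
equality of these contents is positionless equality `≅` of topmost `k`-stacks. -/
def topStk {Γ : Type} (n : ℕ) (s : St Γ) (k : ℕ) : Option (St Γ) :=
  sub? s (topAddr s (n - k))

/-- Number of components of the (composite) stack at the given address. -/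
def sizeAt {Γ : Type} (s : St Γ) (p : List ℕ) : ℕ :=
  match sub? s p with
  | some (St.node l) => l.length
  | _ => 0

/-- Remove the topmost component of a composite stack
(defined only when it has at least two components). -/
def popStk {Γ : Type} : St Γ → Option (St Γ)
  | St.node l => if 2 ≤ l.length then some (St.node l.dropLast) else none
  | St.leaf _ => none

/-- Duplicate the topmost `(r-1)`-stack of an `r`-stack,
replacing the topmost symbol of the new copy by `γ`. -/
def dupTop {Γ : Type} (r : ℕ) (γ : Γ) : St Γ → Option (St Γ)
  | St.node l =>
      match l.getLast? with
      | none => none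
      | some t =>
          match modAt t (topAddr t (r - 1)) (fun u =>
            match u with
            | St.leaf _ => some (St.leaf γ)
            | St.node _ => none) with
          | none => none
          | some t' => some (St.node (l ++ [t']))
  | St.leaf _ => none

/-- `push^r_γ` on an order-`n` stack. -/
def pushOp {Γ : Type} (n r : ℕ) (γ : Γ) (s : St Γ) : Option (St Γ) :=
  modAt s (topAddr s (n - r)) (dupTop r γ)

/-- `pop^r` on an order-`n` stack. -/
def popOp {Γ : Type} (n r : ℕ) (s : St Γ) : Option (St Γ) :=
  modAt s (topAddr s (n - r)) popStk

/-- Stack operations of an order-`n` pushdown automaton. -/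
inductive Op (Γ : Type) where
  | pop (k : ℕ)
  | push (k : ℕ) (γ : Γ)

def applyOp {Γ : Type} (n : ℕ) : Op Γ → St Γ → Option (St Γ)
  | Op.pop k, s => if 1 ≤ k ∧ k ≤ n then popOp n k s else none
  | Op.push k γ, s => if 1 ≤ k ∧ k ≤ n then pushOp n k γ s else none

/-- The one-step history function on addresses: for the address of a substack of
`op(s)` it returns the address of the substack of `s` from which it originates. -/
def histStep {Γ : Type} (n : ℕ) : Op Γ → St Γ → List ℕ → List ℕ
  | Op.pop _, _, p => p
  | Op.push r _, s, p =>
      let m := n - r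
      let ta := topAddr s m
      let sz := sizeAt s ta
      if p.take (m + 1) = ta ++ [sz] then p.set m (sz - 1) else p

/-! ### Deterministic order-`n` pushdown automata -/

inductive Trans (A Γ Q : Type) where
  | read (f : A → Q)
  | op (q : Q) (o : Op Γ)

/-- A deterministic order-`n` pushdown automaton. -/
structure DPDA (n : ℕ) (A Γ : Type) where
  Q : Type
  finQ : Finite Q
  qI : Q
  γI : Γ
  F : Set Q
  δ : Q → Γ → Trans A Γ Q
  read_inj : ∀ q γ f, δ q γ = Trans.read f → Function.Injective f

/-- One step of an `n`-DPDA; the label records the letter read (if any). -/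
inductive Step {n : ℕ} {A Γ : Type} (D : DPDA n A Γ) :
    D.Q × St Γ → Option A → D.Q × St Γ → Prop where
  | read {q : D.Q} {s : St Γ} {γ : Γ} {f : A → D.Q} (a : A) :
      IsValid n s → topLeaf? n s = some γ → D.δ q γ = Trans.read f →
      Step D (q, s) (some a) (f a, s)
  | op {q : D.Q} {s s' : St Γ} {γ : Γ} {q' : D.Q} {o : Op Γ} :
      IsValid n s → topLeaf? n s = some γ → D.δ q γ = Trans.op q' o →
      applyOp n o s = some s' →
      Step D (q, s) none (q', s')

/-- A (finite) run `R(0), …, R(len)` of an `n`-DPDA. -/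
structure Run {n : ℕ} {A Γ : Type} (D : DPDA n A Γ) where
  len : ℕ
  cfg : ℕ → D.Q × St Γ
  lab : ℕ → Option A
  ok : ∀ i < len, Step D (cfg i) (lab i) (cfg (i + 1))

namespace Run

variable {n : ℕ} {A Γ : Type} {D : DPDA n A Γ}

/-- The word read by a run. -/
def word (R : Run D) : List A := (List.range R.len).filterMap R.lab

/-- The subrun `R[i,j]`. -/
def sub (R : Run D) (i j : ℕ) : Run D where
  len := min j R.len - i
  cfg := fun t => R.cfg (i + t)
  lab := fun t => R.lab (i + t)
  ok := fun t ht => R.ok (i + t) (by omega)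

/-- The history function of the single step starting at position `j` of the run. -/
def stepHist (R : Run D) (j : ℕ) : List ℕ → List ℕ :=
  match topLeaf? n (R.cfg j).2 with
  | none => id
  | some γ =>
      match D.δ (R.cfg j).1 γ with
      | Trans.read _ => id
      | Trans.op _ o => histStep n o (R.cfg j).2

/-- `histTo R i j p` : the address in `R(i)` of the origin (history) of the substack
of `R(j)` sitting at address `p` (meaningful for `i ≤ j ≤ R.len`). -/
def histTo (R : Run D) (i : ℕ) : ℕ → List ℕ → List ℕ
  | 0, p => p
  | j + 1, p => if j + 1 ≤ i then p else histTo R i j (stepHist R j p)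

/-- A run is `k`-upper when the topmost `k`-stack at its end originates from
the topmost `k`-stack at its start. -/
def IsUpper (R : Run D) (k : ℕ) : Prop :=
  histTo R 0 R.len (topAddr (R.cfg R.len).2 (n - k)) = topAddr (R.cfg 0).2 (n - k)

/-- A run is a `k`-return when the topmost `(k-1)`-stack at its end originates from the
topmost `(k-1)`-stack of `pop^k` of its starting stack, and no suffix is `(k-1)`-upper. -/
def IsReturn (R : Run D) (k : ℕ) : Prop :=
  (histTo R 0 R.len (topAddr (R.cfg R.len).2 (n - (k - 1))) =
    topAddr (R.cfg 0).2 (n - k) ++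
      [sizeAt (R.cfg 0).2 (topAddr (R.cfg 0).2 (n - k)) - 2]) ∧
  ∀ i < R.len, ¬ (R.sub i R.len).IsUpper (k - 1)

end Run

/-- `R` is the composition `S ∘ T` of the runs `S` and `T`. -/
def IsComp {n : ℕ} {A Γ : Type} {D : DPDA n A Γ} (R S T : Run D) : Prop :=
  S.cfg S.len = T.cfg 0 ∧ R.len = S.len + T.len ∧
  (∀ i ≤ S.len, R.cfg i = S.cfg i) ∧ (∀ i < S.len, R.lab i = S.lab i) ∧
  (∀ i ≤ T.len, R.cfg (S.len + i) = T.cfg i) ∧ (∀ i < T.len, R.lab (S.len + i) = T.lab i)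

/-- `Decomp R k r c` : `c 0 < c 1 < … < c r` are the cut points of the (unique)
decomposition of the `k`-upper run `R` into the maximal number of nonempty
`k`-upper runs. -/
def Decomp {n : ℕ} {A Γ : Type} {D : DPDA n A Γ} (R : Run D) (k r : ℕ) (c : ℕ → ℕ) : Prop :=
  c 0 = 0 ∧ c r = R.len ∧ (∀ j < r, c j < c (j + 1)) ∧ (∀ j ≤ r, c j ≤ R.len) ∧
  (∀ j < r, (R.sub (c j) (c (j + 1))).IsUpper k) ∧
  (∀ j < r, ∀ i, c j < i → i < c (j + 1) → ¬ (R.sub i (c (j + 1))).IsUpper k)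

/-- The image under the morphism generated by `φ` of a word. -/
def phiW {A M : Type} [Monoid M] (φ : A → M) (w : List A) : M := (w.map φ).prod

/-- The two `k`-upper runs `R` and `S` are `(k,φ)`-parallel. -/
def Parallel {n : ℕ} {A Γ M : Type} [Monoid M] {D : DPDA n A Γ}
    (φ : A → M) (R S : Run D) (k : ℕ) : Prop :=
  R.IsUpper k ∧ S.IsUpper k ∧
  topStk n (R.cfg R.len).2 k = topStk n (S.cfg S.len).2 k ∧
  ∃ (r : ℕ) (cR cS : ℕ → ℕ), Decomp R k r cR ∧ Decomp S k r cS ∧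
    ∀ j < r,
      phiW φ (R.sub (cR j) (cR (j + 1))).word = phiW φ (S.sub (cS j) (cS (j + 1))).word ∧
      topStk n (R.cfg (cR j)).2 k = topStk n (S.cfg (cS j)).2 k

/-- An infinite run of an `n`-DPDA. -/
structure InfRun {n : ℕ} {A Γ : Type} (D : DPDA n A Γ) where
  cfg : ℕ → D.Q × St Γ
  lab : ℕ → Option A
  ok : ∀ i, Step D (cfg i) (lab i) (cfg (i + 1))

/-- The finite subrun `R[i,j]` of an infinite run. -/
def InfRun.sub {n : ℕ} {A Γ : Type} {D : DPDA n A Γ} (R : InfRun D) (i j : ℕ) : Run D where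
  len := j - i
  cfg := fun t => R.cfg (i + t)
  lab := fun t => R.lab (i + t)
  ok := fun t _ => R.ok (i + t)

/-- A step label reads nothing, or reads the `star` symbol. -/
def OnlyStar {A : Type} (star : A) (o : Option A) : Prop := o = none ∨ o = some star

/-- Milestone configurations. -/
def Milestone {n : ℕ} {A Γ : Type} {D : DPDA n A Γ} (star : A) (c : D.Q × St Γ) : Prop :=
  ∃ R : InfRun D, R.cfg 0 = c ∧ (∀ i, OnlyStar star (R.lab i)) ∧
    ∃ I : Set ℕ, I.Infinite ∧ 0 ∈ I ∧ ∀ i ∈ I, ∀ j ∈ I, i ≤ j → (R.sub i j).IsUpper 0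

/-- The initial order-`n` stack, containing the single symbol `γ`. -/
def initStack (n : ℕ) {Γ : Type} (γ : Γ) : St Γ :=
  Nat.rec (motive := fun _ => St Γ) (St.leaf γ) (fun _ s => St.node [s]) n

def initCfg {n : ℕ} {A Γ : Type} (D : DPDA n A Γ) : D.Q × St Γ := (D.qI, initStack n D.γI)

/-- The language recognized by an `n`-DPDA. -/
def Lang {n : ℕ} {A Γ : Type} (D : DPDA n A Γ) : Set (List A) :=
  { w | ∃ R : Run D, R.cfg 0 = initCfg D ∧ R.word = w ∧ (R.cfg R.len).1 ∈ D.F }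

/-! ### Deterministic order-2 collapsible pushdown automata -/

/-- Stack operations of an order-2 collapsible pushdown automaton. -/
inductive COp (Γ : Type) where
  | pop1
  | pop2
  | push1 (γ : Γ)
  | push2 (γ : Γ)
  | collapse

/-- An order-2 collapsible stack: a list of 1-stacks (topmost first), each a list of
0-stacks (topmost first) storing a symbol and the collapse link (a natural number). -/
abbrev CStk (Γ : Type) := List (List (Γ × ℕ))

/-- Semantics of the order-2 collapsible stack operations. -/
def capply {Γ : Type} : COp Γ → CStk Γ → Option (CStk Γ)
  | COp.pop1, (_ :: x :: t) :: rest => some ((x :: t) :: rest)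
  | COp.pop1, _ => none
  | COp.pop2, _ :: s :: rest => some (s :: rest)
  | COp.pop2, _ => none
  | COp.push1 γ, (x :: t) :: rest => some (((γ, rest.length + 1) :: x :: t) :: rest)
  | COp.push1 _, _ => none
  | COp.push2 γ, ((x, m) :: t) :: rest => some (((γ, m) :: t) :: ((x, m) :: t) :: rest)
  | COp.push2 _, _ => none
  | COp.collapse, ((x, m) :: t) :: rest =>
      if 1 ≤ m - 1 ∧ m - 1 ≤ rest.length + 1 then
        some ((((x, m) :: t) :: rest).drop (rest.length + 1 - (m - 1)))
      else none
  | COp.collapse, _ => none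

/-- The topmost stack symbol of an order-2 collapsible stack. -/
def ctop? {Γ : Type} : CStk Γ → Option Γ
  | ((γ, _) :: _) :: _ => some γ
  | _ => none

inductive CTrans (A Γ Q : Type) where
  | read (f : A → Q)
  | op (q : Q) (o : COp Γ)

/-- A deterministic order-2 collapsible pushdown automaton. -/
structure CPDA2 (A Γ : Type) where
  Q : Type
  finQ : Finite Q
  qI : Q
  γI : Γ
  F : Set Q
  δ : Q → Γ → CTrans A Γ Q
  read_inj : ∀ q γ f, δ q γ = CTrans.read f → Function.Injective f

inductive CStep {A Γ : Type} (D : CPDA2 A Γ) :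
    D.Q × CStk Γ → Option A → D.Q × CStk Γ → Prop where
  | read {q : D.Q} {s : CStk Γ} {γ : Γ} {f : A → D.Q} (a : A) :
      ctop? s = some γ → D.δ q γ = CTrans.read f → CStep D (q, s) (some a) (f a, s)
  | op {q : D.Q} {s s' : CStk Γ} {γ : Γ} {q' : D.Q} {o : COp Γ} :
      ctop? s = some γ → D.δ q γ = CTrans.op q' o → capply o s = some s' →
      CStep D (q, s) none (q', s')

structure CRun {A Γ : Type} (D : CPDA2 A Γ) where
  len : ℕ
  cfg : ℕ → D.Q × CStk Γ
  lab : ℕ → Option A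
  ok : ∀ i < len, CStep D (cfg i) (lab i) (cfg (i + 1))

def CRun.word {A Γ : Type} {D : CPDA2 A Γ} (R : CRun D) : List A :=
  (List.range R.len).filterMap R.lab

def cinitCfg {A Γ : Type} (D : CPDA2 A Γ) : D.Q × CStk Γ := (D.qI, [[(D.γI, 1)]])

/-- The language recognized by a 2-DCPDA. -/
def CLang {A Γ : Type} (D : CPDA2 A Γ) : Set (List A) :=
  { w | ∃ R : CRun D, R.cfg 0 = cinitCfg D ∧ R.word = w ∧ (R.cfg R.len).1 ∈ D.F }

/-! ### The alphabet `{[, ], ⋆, ♯}`, the function `stars`, and the language `U` -/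

inductive Alph : Type where
  | lb    -- the opening bracket [
  | rb    -- the closing bracket ]
  | star  -- ⋆
  | sharp -- ♯
  deriving DecidableEq

instance : Fintype Alph :=
  ⟨{Alph.lb, Alph.rb, Alph.star, Alph.sharp}, fun x => by cases x <;> simp⟩

/-- Processes a word over `{[, ], ⋆}`, keeping the total number of stars read so far and,
for each currently unmatched opening bracket (most recent first), the number of stars
read before it; returns `none` iff some prefix has more `]` than `[`. -/
def starsAux : List Alph → ℕ → List ℕ → Option (List ℕ)
  | [], _, st => some st
  | Alph.star :: w, cnt, st => starsAux w (cnt + 1) st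
  | Alph.lb :: w, cnt, st => starsAux w cnt (cnt :: st)
  | Alph.rb :: w, cnt, st =>
      match st with
      | [] => none
      | _ :: st' => starsAux w cnt st'
  | Alph.sharp :: _, _, _ => none

/-- `stars w` : `0` if some prefix of `w` has more closing than opening brackets, or if
`w` has equally many opening and closing brackets; otherwise the number of `⋆`s in `w`
before the last opening bracket of `w` not matched by a closing bracket. -/
def stars (w : List Alph) : ℕ :=
  match starsAux w 0 [] with
  | some (c :: _) => c
  | _ => 0

/-- The language `U = { w ♯^(stars(w)+1) | w ∈ {[, ], ⋆}* }`. -/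
def U : Set (List Alph) :=
  { u | ∃ w : List Alph, Alph.sharp ∉ w ∧ u = w ++ List.replicate (stars w + 1) Alph.sharp }

/-! ### Tree-generating pushdown systems -/

inductive TTrans (A Γ Q : Type) where
  | branch (a : A) (next : ℕ → Q)
  | op (q : Q) (o : Op Γ)

/-- A deterministic tree-generating order-`n` pushdown system (without collapse)
over the ranked alphabet `(A, rank)`. -/
structure TreePDA (n : ℕ) (A Γ : Type) (rank : A → ℕ) where
  Q : Type
  finQ : Finite Q
  qI : Q
  γI : Γ
  δ : Q → Γ → TTrans A Γ Q
  branch_inj : ∀ q γ a next, δ q γ = TTrans.branch a next →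
      ∀ i j, i < rank a → j < rank a → next i = next j → i = j

/-- One step of a tree-generating `n`-PDS; the label records the child chosen
at a branch step (if any). -/
inductive TStep {n : ℕ} {A Γ : Type} {rank : A → ℕ} (D : TreePDA n A Γ rank) :
    D.Q × St Γ → Option ℕ → D.Q × St Γ → Prop where
  | branch {q : D.Q} {s : St Γ} {γ : Γ} {a : A} {next : ℕ → D.Q} {i : ℕ} :
      IsValid n s → topLeaf? n s = some γ → D.δ q γ = TTrans.branch a next → i < rank a →
      TStep D (q, s) (some i) (next i, s)
  | op {q : D.Q} {s s' : St Γ} {γ : Γ} {q' : D.Q} {o : Op Γ} :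
      IsValid n s → topLeaf? n s = some γ → D.δ q γ = TTrans.op q' o →
      applyOp n o s = some s' →
      TStep D (q, s) none (q', s')

def TReach {n : ℕ} {A Γ : Type} {rank : A → ℕ} (D : TreePDA n A Γ rank) :
    D.Q × St Γ → D.Q × St Γ → Prop :=
  Relation.ReflTransGen (fun c c' => ∃ o, TStep D c o c')

def TOpReach {n : ℕ} {A Γ : Type} {rank : A → ℕ} (D : TreePDA n A Γ rank) :
    D.Q × St Γ → D.Q × St Γ → Prop :=
  Relation.ReflTransGen (fun c c' => TStep D c none c')

/-- `c` is a configuration at which a `branch(a,…)` transition applies. -/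
def TIsBr {n : ℕ} {A Γ : Type} {rank : A → ℕ} (D : TreePDA n A Γ rank)
    (c : D.Q × St Γ) (a : A) : Prop :=
  ∃ γ next, IsValid n c.2 ∧ topLeaf? n c.2 = some γ ∧ D.δ c.1 γ = TTrans.branch a next

/-- `TFollow D c p c'` : starting from the branch configuration `c` and following
the child choices `p` (each branch step being followed by op steps up to the next
branch configuration) one arrives at the branch configuration `c'`. -/
inductive TFollow {n : ℕ} {A Γ : Type} {rank : A → ℕ} (D : TreePDA n A Γ rank) :
    D.Q × St Γ → List ℕ → D.Q × St Γ → Prop where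
  | nil (c : D.Q × St Γ) : TFollow D c [] c
  | cons {c c₁ c₂ c₃ : D.Q × St Γ} {i : ℕ} {p : List ℕ} :
      TStep D c (some i) c₁ → TOpReach D c₁ c₂ → (∃ a, TIsBr D c₂ a) →
      TFollow D c₂ p c₃ → TFollow D c (i :: p) c₃

def tinitCfg {n : ℕ} {A Γ : Type} {rank : A → ℕ} (D : TreePDA n A Γ rank) : D.Q × St Γ :=
  (D.qI, initStack n D.γI)

/-- `D` generates the ranked tree whose labelling function is `t`
(`t p = some a` iff the node at position `p` exists and is labelled `a`). -/
def TGenerates {n : ℕ} {A Γ : Type} {rank : A → ℕ} (D : TreePDA n A Γ rank)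
    (t : List ℕ → Option A) : Prop :=
  (∀ c, TReach D (tinitCfg D) c → ∃ c' a, TReach D c c' ∧ TIsBr D c' a) ∧
  ∃ c₀, TOpReach D (tinitCfg D) c₀ ∧ (∃ a, TIsBr D c₀ a) ∧
    ∀ p a, t p = some a ↔ ∃ c, TFollow D c₀ p c ∧ TIsBr D c a

/-! ### Tree-generating order-2 collapsible pushdown systems -/

inductive CTTrans (A Γ Q : Type) where
  | branch (a : A) (next : ℕ → Q)
  | op (q : Q) (o : COp Γ)

structure CTreePDA (A Γ : Type) (rank : A → ℕ) where
  Q : Type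
  finQ : Finite Q
  qI : Q
  γI : Γ
  δ : Q → Γ → CTTrans A Γ Q
  branch_inj : ∀ q γ a next, δ q γ = CTTrans.branch a next →
      ∀ i j, i < rank a → j < rank a → next i = next j → i = j

inductive CTStep {A Γ : Type} {rank : A → ℕ} (D : CTreePDA A Γ rank) :
    D.Q × CStk Γ → Option ℕ → D.Q × CStk Γ → Prop where
  | branch {q : D.Q} {s : CStk Γ} {γ : Γ} {a : A} {next : ℕ → D.Q} {i : ℕ} :
      ctop? s = some γ → D.δ q γ = CTTrans.branch a next → i < rank a →
      CTStep D (q, s) (some i) (next i, s)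
  | op {q : D.Q} {s s' : CStk Γ} {γ : Γ} {q' : D.Q} {o : COp Γ} :
      ctop? s = some γ → D.δ q γ = CTTrans.op q' o → capply o s = some s' →
      CTStep D (q, s) none (q', s')

def CTReach {A Γ : Type} {rank : A → ℕ} (D : CTreePDA A Γ rank) :
    D.Q × CStk Γ → D.Q × CStk Γ → Prop :=
  Relation.ReflTransGen (fun c c' => ∃ o, CTStep D c o c')

def CTOpReach {A Γ : Type} {rank : A → ℕ} (D : CTreePDA A Γ rank) :
    D.Q × CStk Γ → D.Q × CStk Γ → Prop :=
  Relation.ReflTransGen (fun c c' => CTStep D c none c')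

def CTIsBr {A Γ : Type} {rank : A → ℕ} (D : CTreePDA A Γ rank)
    (c : D.Q × CStk Γ) (a : A) : Prop :=
  ∃ γ next, ctop? c.2 = some γ ∧ D.δ c.1 γ = CTTrans.branch a next

inductive CTFollow {A Γ : Type} {rank : A → ℕ} (D : CTreePDA A Γ rank) :
    D.Q × CStk Γ → List ℕ → D.Q × CStk Γ → Prop where
  | nil (c : D.Q × CStk Γ) : CTFollow D c [] c
  | cons {c c₁ c₂ c₃ : D.Q × CStk Γ} {i : ℕ} {p : List ℕ} :
      CTStep D c (some i) c₁ → CTOpReach D c₁ c₂ → (∃ a, CTIsBr D c₂ a) →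
      CTFollow D c₂ p c₃ → CTFollow D c (i :: p) c₃

def ctinitCfg {A Γ : Type} {rank : A → ℕ} (D : CTreePDA A Γ rank) : D.Q × CStk Γ :=
  (D.qI, [[(D.γI, 1)]])

/-- The order-2 collapsible pushdown system `D` generates the ranked tree whose
labelling function is `t`. -/
def CTGenerates {A Γ : Type} {rank : A → ℕ} (D : CTreePDA A Γ rank)
    (t : List ℕ → Option A) : Prop :=
  (∀ c, CTReach D (ctinitCfg D) c → ∃ c' a, CTReach D c c' ∧ CTIsBr D c' a) ∧
  ∃ c₀, CTOpReach D (ctinitCfg D) c₀ ∧ (∃ a, CTIsBr D c₀ a) ∧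
    ∀ p a, t p = some a ↔ ∃ c, CTFollow D c₀ p c ∧ CTIsBr D c a


/-!
Follow the address of `top^(k-1)` of the final stack backwards along the run. After position `j`
the maximality of `j` keeps this address out of `top^k` unless it is `top^(k-1)` itself, so at
every position from `j` on it is `top^(k-1)`, `top^(k-1) (pop^k)`, or the topmost `(k-1)`-stack of
another `k`-stack, and every step of the run preserves this trichotomy (`IsTopOrigin`). At `j` the
first case would make `R` `(k-1)`-upper through `R[0,j]`, and the third contradicts `R[j,|R|]`
being `k`-upper.

Before `j` we use that the histories of two neighbouring `(k-1)`-stacks of one `k`-stack stay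
neighbours or merge, never cross (`histTo_snoc_mono`). As `R[0,j]` carries `top^(k-1)` to
`top^(k-1)`, it carries `top^(k-1) (pop^k)` to `top^(k-1) (pop^k)`, since merging would make `R`
`(k-1)`-upper. The same argument excludes `(k-1)`-upper suffixes starting before `j`.
-/

section Stacks

theorem ne_of_length_ne {α : Type} {l₁ l₂ : List α} (h : l₁.length ≠ l₂.length) :
    l₁ ≠ l₂ :=
  mt (congrArg List.length) h

variable {Γ : Type}

theorem sub?_nil (s : St Γ) : sub? s [] = some s := by cases s <;> rfl

theorem sub?_node (l : List (St Γ)) (i : ℕ) (p : List ℕ) :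
    sub? (St.node l) (i :: p) = l[i]?.bind (fun t => sub? t p) := by
  cases h : l[i]? <;> simp [sub?, h]

theorem sub?_append (s : St Γ) (p q : List ℕ) :
    sub? s (p ++ q) = (sub? s p).bind (fun u => sub? u q) := by
  induction p generalizing s with
  | nil => rw [List.nil_append, sub?_nil, Option.bind_some]
  | cons i p ih =>
    cases s with
    | leaf γ => rfl
    | node l =>
      rw [List.cons_append, sub?_node, sub?_node]
      cases l[i]? with
      | none => rfl
      | some t => exact ih t

theorem isSome_sub?_of_append {s : St Γ} {p q : List ℕ} (h : (sub? s (p ++ q)).isSome) :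
    (sub? s p).isSome := by
  rw [sub?_append] at h
  cases hs : sub? s p <;> simp_all

theorem isSome_sub?_snoc_iff {s : St Γ} {w : List ℕ} {x : ℕ} :
    (sub? s (w ++ [x])).isSome ↔ ∃ l, sub? s w = some (St.node l) ∧ x < l.length := by
  rw [sub?_append]
  cases sub? s w with
  | none => simp
  | some u =>
    cases u with
    | leaf γ => simp [sub?]
    | node l => simp [sub?_node, sub?_nil]

theorem sizeAt_eq_length {s : St Γ} {p : List ℕ} {l : List (St Γ)}
    (h : sub? s p = some (St.node l)) : sizeAt s p = l.length := by
  simp [sizeAt, h]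

theorem sizeAt_congr {s₁ s₂ : St Γ} {p₁ p₂ : List ℕ}
    (h : sub? s₁ p₁ = sub? s₂ p₂) : sizeAt s₁ p₁ = sizeAt s₂ p₂ := by
  simp [sizeAt, h]

theorem getElem?_length_sub_one_eq_getLastD {l : List (St Γ)} (hne : l ≠ []) :
    l[l.length - 1]? = some (l.getLastD (St.node [])) := by
  rw [List.getLastD_eq_getLast?, List.getLast?_eq_getElem?,
    List.getElem?_eq_getElem (Nat.sub_lt (List.length_pos_iff.mpr hne) one_pos)]
  rfl

inductive SameShape : St Γ → St Γ → Prop where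
  | leaf (γ γ' : Γ) : SameShape (.leaf γ) (.leaf γ')
  | node (l l' : List (St Γ)) (hlen : l.length = l'.length)
      (h : ∀ (i : ℕ) (u u' : St Γ), l[i]? = some u → l'[i]? = some u' → SameShape u u') :
      SameShape (.node l) (.node l')

theorem SameShape.refl : ∀ (s : St Γ), SameShape s s
  | .leaf γ => .leaf γ γ
  | .node l => .node l l rfl (fun i u u' hu hu' => by
      obtain rfl : u = u' := Option.some.inj (hu.symm.trans hu')
      have : sizeOf u < sizeOf l := List.sizeOf_lt_of_mem (List.mem_of_getElem? hu)
      exact SameShape.refl u)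
termination_by s => sizeOf s

theorem SameShape.sub?_rel {s s' : St Γ} (h : SameShape s s') (p : List ℕ) :
    (sub? s p = none ∧ sub? s' p = none) ∨
      ∃ u u', sub? s p = some u ∧ sub? s' p = some u' ∧ SameShape u u' := by
  induction h generalizing p with
  | leaf γ γ' =>
    cases p with
    | nil => exact Or.inr ⟨_, _, sub?_nil _, sub?_nil _, .leaf γ γ'⟩
    | cons i q => exact Or.inl ⟨rfl, rfl⟩
  | node l l' hlen h ih =>
    cases p with
    | nil => exact Or.inr ⟨_, _, sub?_nil _, sub?_nil _, .node l l' hlen h⟩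
    | cons i q =>
      rw [sub?_node, sub?_node]
      cases hu : l[i]? with
      | none =>
        rw [List.getElem?_eq_none_iff.mpr (hlen ▸ List.getElem?_eq_none_iff.mp hu)]
        exact Or.inl ⟨rfl, rfl⟩
      | some u =>
        have hi : i < l'.length := hlen ▸ (List.getElem?_eq_some_iff.mp hu).1
        rw [List.getElem?_eq_getElem hi]
        exact ih i u _ hu (List.getElem?_eq_getElem hi) q

theorem SameShape.sub?_isSome {s s' : St Γ} (h : SameShape s s') (p : List ℕ) :
    (sub? s p).isSome = (sub? s' p).isSome := by
  rcases h.sub?_rel p with ⟨h1, h2⟩ | ⟨u, u', h1, h2, _⟩ <;> simp [h1, h2]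

theorem SameShape.sizeAt_eq {s s' : St Γ} (h : SameShape s s') (p : List ℕ) :
    sizeAt s p = sizeAt s' p := by
  rcases h.sub?_rel p with ⟨h1, h2⟩ | ⟨u, u', h1, h2, hss⟩
  · simp [sizeAt, h1, h2]
  · simp only [sizeAt, h1, h2]
    cases hss with
    | leaf => rfl
    | node l l' hlen _ => simpa using hlen

theorem SameShape.getLastD {l l' : List (St Γ)} (h : SameShape (.node l) (.node l')) :
    SameShape (l.getLastD (.node [])) (l'.getLastD (.node [])) := by
  cases h with
  | node _ _ hlen hh =>
    by_cases hl : l = []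
    · subst hl
      obtain rfl : l' = [] := List.eq_nil_of_length_eq_zero hlen.symm
      exact SameShape.refl _
    · have hl' : l' ≠ [] := fun h' => hl (List.eq_nil_of_length_eq_zero (by simp [hlen, h']))
      apply hh (l.length - 1)
      · exact getElem?_length_sub_one_eq_getLastD hl
      · rw [hlen]; exact getElem?_length_sub_one_eq_getLastD hl'

theorem SameShape.topAddr_eq {s s' : St Γ} (h : SameShape s s') (d : ℕ) :
    topAddr s d = topAddr s' d := by
  induction d generalizing s s' with
  | zero => cases s <;> cases s' <;> rfl
  | succ d ih =>
    cases h with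
    | leaf => rfl
    | node l l' hlen hh =>
      simp only [topAddr, hlen]
      rw [ih (SameShape.getLastD (.node l l' hlen hh))]

theorem SameShape.isValid {s s' : St Γ} (h : SameShape s s') :
    ∀ m, IsValid m s → IsValid m s' := by
  induction h with
  | leaf γ γ' => intro m hv; cases m <;> simp_all [IsValid]
  | node l l' hlen h ih =>
    rintro (_ | m) ⟨hne, hmem⟩
    refine ⟨fun hc => hne (List.eq_nil_of_length_eq_zero (hlen.trans (by simp [hc]))), ?_⟩
    intro t' ht'
    obtain ⟨i, hi, rfl⟩ := List.getElem_of_mem ht'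
    have hil : i < l.length := hlen ▸ hi
    exact ih i _ _ (List.getElem?_eq_getElem hil) (List.getElem?_eq_getElem hi) m
      (hmem _ (List.getElem_mem hil))

end Stacks

section ModAt

variable {Γ : Type} {s s' : St Γ} {F : St Γ → Option (St Γ)}

theorem modAt_nil (s : St Γ) (F : St Γ → Option (St Γ)) : modAt s [] F = F s := by
  cases s <;> rfl

theorem modAt_cons_eq_some {i : ℕ} {p : List ℕ} (h : modAt s (i :: p) F = some s') :
    ∃ l t t', s = .node l ∧ l[i]? = some t ∧ modAt t p F = some t' ∧
      s' = .node (l.set i t') := by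
  cases s with
  | leaf γ => simp [modAt] at h
  | node l =>
    simp only [modAt] at h
    split at h
    · simp at h
    · rename_i t ht
      split at h
      · simp at h
      · rename_i t' hm
        exact ⟨l, t, t', rfl, ht, hm, (Option.some.inj h).symm⟩

theorem exists_sub?_of_modAt {α : List ℕ} (h : modAt s α F = some s') :
    ∃ u u', sub? s α = some u ∧ F u = some u' ∧ sub? s' α = some u' := by
  induction α generalizing s s' with
  | nil => rw [modAt_nil] at h; exact ⟨s, s', sub?_nil s, h, sub?_nil s'⟩
  | cons i p ih =>
    obtain ⟨l, t, t', rfl, ht, hm, rfl⟩ := modAt_cons_eq_some h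
    obtain ⟨u, u', h1, h2, h3⟩ := ih hm
    have hi : i < l.length := (List.getElem?_eq_some_iff.mp ht).1
    refine ⟨u, u', ?_, h2, ?_⟩
    · rw [sub?_node, ht, Option.bind_some, h1]
    · rw [sub?_node, List.getElem?_set_self hi, Option.bind_some, h3]

theorem sub?_modAt_of_not_prefix {α p : List ℕ} (h : modAt s α F = some s')
    (h1 : ¬ p <+: α) (h2 : ¬ α <+: p) : sub? s' p = sub? s p := by
  induction α generalizing s s' p with
  | nil => exact absurd List.nil_prefix h2
  | cons i q ih =>
    obtain ⟨l, t, t', rfl, ht, hm, rfl⟩ := modAt_cons_eq_some h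
    cases p with
    | nil => exact absurd List.nil_prefix h1
    | cons j r =>
      rw [sub?_node, sub?_node]
      by_cases hij : j = i
      · subst hij
        rw [List.getElem?_set_self (List.getElem?_eq_some_iff.mp ht).1, ht]
        exact ih hm (fun hc => h1 (List.cons_prefix_cons.mpr ⟨rfl, hc⟩))
          (fun hc => h2 (List.cons_prefix_cons.mpr ⟨rfl, hc⟩))
      · rw [List.getElem?_set_ne (Ne.symm hij)]

theorem sub?_modAt_of_prefix {α p : List ℕ} (h : modAt s α F = some s')
    (h1 : p <+: α) (h2 : p ≠ α) :
    ∃ l l', sub? s p = some (St.node l) ∧ sub? s' p = some (St.node l') ∧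
      l'.length = l.length := by
  induction α generalizing s s' p with
  | nil => exact absurd (List.prefix_nil.mp h1) h2
  | cons i q ih =>
    obtain ⟨l, t, t', rfl, ht, hm, rfl⟩ := modAt_cons_eq_some h
    cases p with
    | nil => exact ⟨l, l.set i t', sub?_nil _, sub?_nil _, List.length_set⟩
    | cons j r =>
      obtain ⟨rfl, hrq⟩ := List.cons_prefix_cons.mp h1
      rw [sub?_node, sub?_node, ht, List.getElem?_set_self (List.getElem?_eq_some_iff.mp ht).1]
      exact ih hm hrq (fun hc => h2 (by rw [hc]))

theorem IsValid.modAt {α : List ℕ} {m : ℕ} (hv : IsValid m s) (h : modAt s α F = some s')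
    (hF : ∀ u u', F u = some u' → IsValid (m - α.length) u → IsValid (m - α.length) u') :
    IsValid m s' := by
  induction α generalizing s s' m with
  | nil => rw [modAt_nil] at h; simpa using hF s s' h (by simpa using hv)
  | cons i q ih =>
    obtain ⟨l, t, t', rfl, ht, hm, rfl⟩ := modAt_cons_eq_some h
    obtain _ | m := m
    · exact hv.elim
    obtain ⟨hne, hmem⟩ := hv
    have hvt' : IsValid m t' := ih (hmem t (List.mem_of_getElem? ht)) hm (by simpa using hF)
    refine ⟨by simp [hne], fun v hv => ?_⟩
    obtain ⟨jj, hjj⟩ := List.mem_iff_getElem?.mp hv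
    by_cases hji : jj = i
    · subst hji
      rw [List.getElem?_set_self (List.getElem?_eq_some_iff.mp ht).1] at hjj
      exact Option.some.inj hjj ▸ hvt'
    · rw [List.getElem?_set_ne (Ne.symm hji)] at hjj
      exact hmem _ (List.mem_of_getElem? hjj)

theorem SameShape.of_modAt (hF : ∀ u u', F u = some u' → SameShape u u') {α : List ℕ}
    (h : modAt s α F = some s') : SameShape s s' := by
  induction α generalizing s s' with
  | nil => rw [modAt_nil] at h; exact hF s s' h
  | cons i q ih =>
    obtain ⟨l, u, u', rfl, hu, hm, rfl⟩ := modAt_cons_eq_some h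
    refine .node _ _ List.length_set.symm fun jj v v' hv hv' => ?_
    by_cases hji : jj = i
    · subst hji
      rw [List.getElem?_set_self (List.getElem?_eq_some_iff.mp hu).1] at hv'
      rw [hu] at hv
      cases hv; cases hv'
      exact ih hm
    · rw [List.getElem?_set_ne (Ne.symm hji), hv] at hv'
      cases hv'
      exact SameShape.refl v

theorem modAt_isSome_sizeAt_of_ne {α p : List ℕ} {l l' : List (St Γ)}
    (h : modAt s α F = some s') (hsub : sub? s α = some (.node l))
    (hsub' : sub? s' α = some (.node l')) (hne : p ≠ α)
    (hagree : ∀ j ρ, p = α ++ j :: ρ → j < l'.length → l'[j]? = l[j]?)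
    (hp : (sub? s' p).isSome) : (sub? s p).isSome ∧ sizeAt s p = sizeAt s' p := by
  by_cases hpα : p <+: α
  · obtain ⟨l₁, l₂, h1, h2, h3⟩ := sub?_modAt_of_prefix h hpα hne
    rw [sizeAt_eq_length h1, sizeAt_eq_length h2, h1, h3]
    exact ⟨rfl, rfl⟩
  by_cases hαp : α <+: p
  · obtain ⟨_ | ⟨j, ρ⟩, rfl⟩ := hαp
    · simp at hne
    have hj : j < l'.length := by
      rw [List.append_cons] at hp
      obtain ⟨l'', h'', hj⟩ := isSome_sub?_snoc_iff.mp (isSome_sub?_of_append hp)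
      rw [hsub'] at h''
      cases h''
      exact hj
    have heq : sub? s' (α ++ j :: ρ) = sub? s (α ++ j :: ρ) := by
      rw [sub?_append, sub?_append, hsub, hsub', Option.bind_some, Option.bind_some,
        sub?_node, sub?_node, hagree j ρ rfl hj]
    exact ⟨heq ▸ hp, sizeAt_congr heq.symm⟩
  · have heq := sub?_modAt_of_not_prefix h hpα hαp
    exact ⟨heq ▸ hp, sizeAt_congr heq.symm⟩

end ModAt

section TopAddr

variable {Γ : Type} {m : ℕ} {s : St Γ}

theorem topAddr_zero (s : St Γ) : topAddr s 0 = [] := by cases s <;> rfl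

theorem topAddr_node (l : List (St Γ)) (d : ℕ) :
    topAddr (St.node l) (d + 1) = (l.length - 1) :: topAddr (l.getLastD (St.node [])) d := rfl

theorem IsValid.getLastD {l : List (St Γ)} (hv : IsValid (m + 1) (St.node l)) :
    l[l.length - 1]? = some (l.getLastD (St.node [])) ∧ IsValid m (l.getLastD (St.node [])) :=
  have h := getElem?_length_sub_one_eq_getLastD hv.1
  ⟨h, hv.2 _ (List.mem_of_getElem? h)⟩

theorem IsValid.exists_sub?_topAddr (hv : IsValid m s) {d : ℕ} (hd : d ≤ m) :
    ∃ u, sub? s (topAddr s d) = some u ∧ IsValid (m - d) u ∧ (topAddr s d).length = d := by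
  induction d generalizing m s with
  | zero => exact ⟨s, by rw [topAddr_zero, sub?_nil], hv, by rw [topAddr_zero]; rfl⟩
  | succ d ih =>
    obtain _ | m := m
    · omega
    cases s with
    | leaf γ => exact hv.elim
    | node l =>
      obtain ⟨hget, hvt⟩ := hv.getLastD
      obtain ⟨u, hu, hvu, hlen⟩ := ih hvt (by omega)
      refine ⟨u, ?_, by simpa using hvu, by rw [topAddr_node, List.length_cons, hlen]⟩
      rw [topAddr_node, sub?_node, hget, Option.bind_some, hu]

theorem IsValid.isSome_sub?_topAddr (hv : IsValid m s) {d : ℕ} (hd : d ≤ m) :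
    (sub? s (topAddr s d)).isSome := by
  obtain ⟨u, hu, -⟩ := hv.exists_sub?_topAddr hd
  rw [hu]
  rfl

theorem IsValid.exists_sub?_topAddr_node (hv : IsValid m s) {d : ℕ} (hd : d < m) :
    ∃ l, sub? s (topAddr s d) = some (St.node l) ∧ l ≠ [] := by
  obtain ⟨u, hu, hvu, -⟩ := hv.exists_sub?_topAddr hd.le
  obtain ⟨m', hm'⟩ : ∃ m', m - d = m' + 1 := ⟨m - d - 1, by omega⟩
  rw [hm'] at hvu
  cases u with
  | leaf γ => exact hvu.elim
  | node l => exact ⟨l, hu, hvu.1⟩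

theorem topAddr_length (hv : IsValid m s) {d : ℕ} (hd : d ≤ m) : (topAddr s d).length = d :=
  (hv.exists_sub?_topAddr hd).choose_spec.2.2

theorem one_le_sizeAt_topAddr (hv : IsValid m s) {d : ℕ} (hd : d < m) :
    1 ≤ sizeAt s (topAddr s d) := by
  obtain ⟨l, hl, hne⟩ := hv.exists_sub?_topAddr_node hd
  rw [sizeAt_eq_length hl]
  exact List.length_pos_iff.mpr hne

theorem topAddr_append (hv : IsValid m s) {d e : ℕ} (hde : d ≤ e) (hem : e ≤ m) {u : St Γ}
    (hu : sub? s (topAddr s d) = some u) : topAddr s e = topAddr s d ++ topAddr u (e - d) := by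
  induction d generalizing m s e with
  | zero =>
    rw [topAddr_zero, sub?_nil] at hu
    cases hu
    simp [topAddr_zero]
  | succ d ih =>
    obtain _ | m := m
    · omega
    obtain _ | e := e
    · omega
    cases s with
    | leaf γ => exact hv.elim
    | node l =>
      obtain ⟨hget, hvt⟩ := hv.getLastD
      rw [topAddr_node, sub?_node, hget, Option.bind_some] at hu
      rw [topAddr_node, topAddr_node, ih hvt (by omega) (by omega) hu]
      simp

theorem topAddr_succ (hv : IsValid m s) {d : ℕ} (hd : d < m) :
    topAddr s (d + 1) = topAddr s d ++ [sizeAt s (topAddr s d) - 1] := by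
  obtain ⟨l, hl, -⟩ := hv.exists_sub?_topAddr_node hd
  rw [topAddr_append hv (Nat.le_succ d) hd hl, sizeAt_eq_length hl, Nat.succ_sub le_rfl,
    Nat.sub_self]
  rfl

theorem topAddr_take (hv : IsValid m s) {d e : ℕ} (hde : d ≤ e) (hem : e ≤ m) :
    (topAddr s e).take d = topAddr s d := by
  obtain ⟨u, hu, -, hlen⟩ := hv.exists_sub?_topAddr (hde.trans hem)
  rw [topAddr_append hv hde hem hu, List.take_left' hlen]

theorem topAddr_getElem? (hv : IsValid m s) {d e : ℕ} (hde : d < e) (hem : e ≤ m) :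
    (topAddr s e)[d]? = some (sizeAt s (topAddr s d) - 1) := by
  rw [← List.getElem?_take_of_lt (Nat.lt_succ_self d), topAddr_take hv hde hem,
    topAddr_succ hv (by omega), List.getElem?_append_right (topAddr_length hv (by omega)).le,
    topAddr_length hv (by omega)]
  simp

theorem topAddr_eq_append_cons {d e : ℕ} (hv : IsValid m s) (hde : d < e) (hem : e ≤ m) :
    ∃ ρ, topAddr s e = topAddr s d ++ (sizeAt s (topAddr s d) - 1) :: ρ :=
  ⟨(topAddr s e).drop (d + 1), by
    conv_lhs => rw [← List.take_append_drop (d + 1) (topAddr s e)]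
    rw [topAddr_take hv hde hem, topAddr_succ hv (by omega), List.append_assoc,
      List.singleton_append]⟩

theorem topAddr_modAt {n c : ℕ} {s' : St Γ} {F : St Γ → Option (St Γ)}
    (hv : IsValid n s) (hv' : IsValid n s') (hc : c ≤ n)
    (h : modAt s (topAddr s c) F = some s') {d : ℕ} (hdc : d ≤ c) :
    topAddr s' d = topAddr s d := by
  induction d with
  | zero => rw [topAddr_zero, topAddr_zero]
  | succ d ih =>
    rw [topAddr_succ hv' (by omega), topAddr_succ hv (by omega), ih (by omega)]
    have hpre : topAddr s d <+: topAddr s c :=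
      ⟨(topAddr s c).drop d, by rw [← topAddr_take hv (by omega) hc, List.take_append_drop]⟩
    have hne : topAddr s d ≠ topAddr s c := fun he => by
      have := congrArg List.length he
      rw [topAddr_length hv (by omega), topAddr_length hv hc] at this
      omega
    obtain ⟨l, l', h1, h2, h3⟩ := sub?_modAt_of_prefix h hpre hne
    rw [sizeAt_eq_length h1, sizeAt_eq_length h2, h3]

end TopAddr

section Operations

variable {Γ : Type} {n r : ℕ} {s s' : St Γ}

theorem sub?_append_cons {α : List ℕ} {l : List (St Γ)} {j : ℕ} {t : St Γ}
    (h : sub? s α = some (.node l)) (hj : l[j]? = some t) (ρ : List ℕ) :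
    sub? s (α ++ j :: ρ) = sub? t ρ := by
  rw [sub?_append, h, Option.bind_some, sub?_node, hj, Option.bind_some]

theorem IsValid.popStk {m : ℕ} {u u' : St Γ} (hv : IsValid m u) (h : popStk u = some u') :
    IsValid m u' := by
  cases u with
  | leaf γ => simp [HOPDA.popStk] at h
  | node l =>
    simp only [HOPDA.popStk] at h
    split_ifs at h with h2
    cases h
    obtain _ | m := m
    · exact hv.elim
    refine ⟨fun hc => ?_, fun v hv' => hv.2 v (List.mem_of_mem_dropLast hv')⟩
    have := congrArg List.length hc
    simp only [List.length_dropLast, List.length_nil] at this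
    omega

theorem popOp_spec (h : popOp n r s = some s') :
    ∃ l, sub? s (topAddr s (n - r)) = some (St.node l) ∧ 2 ≤ l.length ∧
      sub? s' (topAddr s (n - r)) = some (St.node l.dropLast) := by
  obtain ⟨u, u', hsub, hF, hsub'⟩ := exists_sub?_of_modAt h
  cases u with
  | leaf γ => simp [popStk] at hF
  | node l =>
    simp only [popStk] at hF
    split_ifs at hF with h2
    cases hF
    exact ⟨l, hsub, h2, hsub'⟩

theorem IsValid.popOp (hv : IsValid n s) (h : popOp n r s = some s') : IsValid n s' :=
  hv.modAt h fun _ _ hF hvu => hvu.popStk hF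

theorem popOp_isSome_sizeAt (h : popOp n r s = some s') {p : List ℕ}
    (hne : p ≠ topAddr s (n - r)) (hp : (sub? s' p).isSome) :
    (sub? s p).isSome ∧ sizeAt s p = sizeAt s' p := by
  obtain ⟨l, hsub, -, hsub'⟩ := popOp_spec h
  refine modAt_isSome_sizeAt_of_ne h hsub hsub' hne (fun j _ _ hj => ?_) hp
  rw [List.getElem?_dropLast, if_pos (by simpa using hj)]

theorem isSome_sub?_of_popOp (h : popOp n r s = some s') {p : List ℕ}
    (hp : (sub? s' p).isSome) : (sub? s p).isSome := by
  by_cases hne : p = topAddr s (n - r)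
  · obtain ⟨l, hsub, -⟩ := popOp_spec h
    rw [hne, hsub]
    rfl
  · exact (popOp_isSome_sizeAt h hne hp).1

theorem dupTop_eq_some {γ : Γ} {u u' : St Γ} (h : dupTop r γ u = some u') :
    ∃ l t t', u = .node l ∧ l.getLast? = some t ∧ SameShape t t' ∧
      u' = .node (l ++ [t']) := by
  cases u with
  | leaf _ => simp [HOPDA.dupTop] at h
  | node l =>
    simp only [HOPDA.dupTop] at h
    split at h
    · simp at h
    · rename_i t ht
      split at h
      · simp at h
      · rename_i t' hm
        refine ⟨l, t, t', rfl, ht, SameShape.of_modAt (fun w w' hw => ?_) hm,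
          (Option.some.inj h).symm⟩
        cases w with
        | leaf g => cases hw; exact .leaf g γ
        | node _ => simp at hw

theorem IsValid.dupTop {m : ℕ} {γ : Γ} {u u' : St Γ} (hv : IsValid m u)
    (h : dupTop r γ u = some u') : IsValid m u' := by
  obtain ⟨l, t, t', rfl, ht, hss, rfl⟩ := dupTop_eq_some h
  obtain _ | m := m
  · exact hv.elim
  refine ⟨by simp, fun v hv' => ?_⟩
  rcases List.mem_append.mp hv' with hvl | hvt
  · exact hv.2 v hvl
  · rw [List.mem_singleton.mp hvt]
    exact hss.isValid m (hv.2 t (List.mem_of_getLast? ht))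

theorem pushOp_spec {γ : Γ} (h : pushOp n r γ s = some s') :
    ∃ l t t', sub? s (topAddr s (n - r)) = some (.node l) ∧ l[l.length - 1]? = some t ∧
      SameShape t t' ∧ sub? s' (topAddr s (n - r)) = some (.node (l ++ [t'])) := by
  obtain ⟨u, u', hsub, hF, hsub'⟩ := exists_sub?_of_modAt h
  obtain ⟨l, t, t', rfl, ht, hss, rfl⟩ := dupTop_eq_some hF
  exact ⟨l, t, t', hsub, by rwa [← List.getLast?_eq_getElem?], hss, hsub'⟩

theorem IsValid.pushOp {γ : Γ} (hv : IsValid n s) (h : pushOp n r γ s = some s') :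
    IsValid n s' :=
  hv.modAt h fun _ _ hF hvu => hvu.dupTop hF

section Push

variable {γ : Γ} {l : List (St Γ)} {t t' : St Γ}

theorem pushOp_topAddr (hv : IsValid n s) (hpush : pushOp n r γ s = some s')
    (hlget : l[l.length - 1]? = some t) (hss : SameShape t t')
    (hsub : sub? s (topAddr s (n - r)) = some (St.node l))
    (hsub' : sub? s' (topAddr s (n - r)) = some (St.node (l ++ [t'])))
    {e : ℕ} (he1 : n - r < e) (he2 : e ≤ n) :
    topAddr s e = topAddr s (n - r) ++ (l.length - 1) :: topAddr t (e - (n - r) - 1) ∧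
      topAddr s' e = topAddr s (n - r) ++ l.length :: topAddr t (e - (n - r) - 1) := by
  have hv' := hv.pushOp hpush
  have hsucc : e - (n - r + 1) = e - (n - r) - 1 := by omega
  constructor
  · have h1 : topAddr s (n - r + 1) = topAddr s (n - r) ++ [l.length - 1] := by
      rw [topAddr_succ hv (by omega), sizeAt_eq_length hsub]
    have h2 : sub? s (topAddr s (n - r + 1)) = some t := by
      rw [h1, sub?_append_cons hsub hlget, sub?_nil]
    rw [topAddr_append hv (by omega) he2 h2, h1, hsucc, List.append_assoc]
    rfl
  · have h1 : topAddr s' (n - r + 1) = topAddr s (n - r) ++ [l.length] := by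
      rw [topAddr_succ hv' (by omega), topAddr_modAt hv hv' (by omega) hpush le_rfl,
        sizeAt_eq_length hsub']
      simp
    have h2 : sub? s' (topAddr s' (n - r + 1)) = some t' := by
      rw [h1, sub?_append_cons hsub' List.getElem?_concat_length, sub?_nil]
    rw [topAddr_append hv' (by omega) he2 h2, h1, hsucc, List.append_assoc, ← hss.topAddr_eq]
    rfl

theorem pushOp_isSome_sizeAt (hv : IsValid n s)
    (hpush : pushOp n r γ s = some s')
    (hsub : sub? s (topAddr s (n - r)) = some (St.node l))
    (hsub' : sub? s' (topAddr s (n - r)) = some (St.node (l ++ [t'])))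
    {p : List ℕ} (hne : p ≠ topAddr s (n - r))
    (hnm : p.take (n - r + 1) ≠ topAddr s (n - r) ++ [l.length])
    (hp : (sub? s' p).isSome) :
    (sub? s p).isSome ∧ sizeAt s p = sizeAt s' p := by
  refine modAt_isSome_sizeAt_of_ne hpush hsub hsub' hne (fun j ρ hpj hj => ?_) hp
  have hjl : j ≠ l.length := by
    rintro rfl
    apply hnm
    simp [hpj, List.take_append, topAddr_length hv (Nat.sub_le n r)]
  have hjl' : j < l.length := by simp at hj; omega
  exact List.getElem?_append_left hjl'

end Push

end Operations

section HistStep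

variable {Γ : Type} {n r : ℕ} {γ : Γ} {s s' : St Γ}

theorem histStep_push (p : List ℕ) :
    histStep n (Op.push r γ) s p =
      if p.take (n - r + 1) = topAddr s (n - r) ++ [sizeAt s (topAddr s (n - r))]
      then p.set (n - r) (sizeAt s (topAddr s (n - r)) - 1) else p := rfl

theorem histStep_push_of_length_le (hv : IsValid n s) {p : List ℕ} (hp : p.length ≤ n - r) :
    histStep n (Op.push r γ) s p = p := by
  rw [histStep_push, if_neg]
  intro h
  have := congrArg List.length h
  simp [topAddr_length hv (Nat.sub_le n r)] at this
  omega

theorem histStep_push_snoc_of_lt {w : List ℕ} (x : ℕ) (hw : n - r < w.length) :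
    histStep n (Op.push r γ) s (w ++ [x]) = histStep n (Op.push r γ) s w ++ [x] := by
  rw [histStep_push, histStep_push, List.take_append_of_le_length (by omega)]
  split_ifs
  · exact List.set_append_left _ _ (by omega)
  · rfl

theorem histStep_push_snoc_of_length_eq (hv : IsValid n s) {w : List ℕ} (x : ℕ)
    (hw : w.length = n - r) :
    histStep n (Op.push r γ) s (w ++ [x]) =
      w ++ [if w = topAddr s (n - r) ∧ x = sizeAt s (topAddr s (n - r))
        then sizeAt s (topAddr s (n - r)) - 1 else x] := by
  have hlen := topAddr_length hv (Nat.sub_le n r)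
  rw [histStep_push, List.take_of_length_le (by simp [hw])]
  by_cases h : w = topAddr s (n - r) ∧ x = sizeAt s (topAddr s (n - r))
  · obtain ⟨rfl, rfl⟩ := h
    rw [if_pos rfl, if_pos ⟨rfl, rfl⟩]
    simp [hlen]
  · rw [if_neg h, if_neg]
    intro hc
    obtain ⟨h1, h2⟩ := List.append_inj hc (by rw [hw, hlen])
    exact h ⟨h1, List.singleton_inj.mp h2⟩

theorem histStep_take (hv : IsValid n s) (o : Op Γ) (p : List ℕ) (d : ℕ) :
    (histStep n o s p).take d = histStep n o s (p.take d) := by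
  obtain _ | ⟨r, γ⟩ := o
  · rfl
  by_cases hd : d ≤ n - r
  · rw [histStep_push_of_length_le (p := p.take d) hv (by simp; omega), histStep_push]
    split_ifs
    · exact List.take_set_of_le hd
    · rfl
  · rw [histStep_push, histStep_push, List.take_take, min_eq_left (by omega)]
    split_ifs
    · exact List.take_set
    · rfl

theorem histStep_push_snoc_mono (hv : IsValid n s) (hpush : pushOp n r γ s = some s')
    {w : List ℕ} {x x' : ℕ} (hxx : x ≤ x')
    (hp : (sub? s' (w ++ [x'])).isSome) :
    ∃ v y y', histStep n (Op.push r γ) s (w ++ [x]) = v ++ [y] ∧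
      histStep n (Op.push r γ) s (w ++ [x']) = v ++ [y'] ∧ y ≤ y' ∧ y' - y ≤ x' - x := by
  rcases lt_trichotomy w.length (n - r) with hL | hL | hL
  · rw [histStep_push_of_length_le hv (by simp; omega),
      histStep_push_of_length_le hv (by simp; omega)]
    exact ⟨w, x, x', rfl, rfl, hxx, by omega⟩
  · rw [histStep_push_snoc_of_length_eq hv x hL, histStep_push_snoc_of_length_eq hv x' hL]
    refine ⟨w, _, _, rfl, rfl, ?_⟩
    by_cases hw : w = topAddr s (n - r)
    · obtain ⟨l, t, t', hsub, -, -, hsub'⟩ := pushOp_spec hpush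
      obtain ⟨l'', h'', hlt⟩ := isSome_sub?_snoc_iff.mp hp
      rw [hw, hsub'] at h''
      cases h''
      simp only [hw, true_and, sizeAt_eq_length hsub]
      simp only [List.length_append, List.length_singleton] at hlt
      split_ifs <;> omega
    · simp only [hw, false_and, if_false]
      exact ⟨hxx, le_rfl⟩
  · rw [histStep_push_snoc_of_lt x hL, histStep_push_snoc_of_lt x' hL]
    exact ⟨_, x, x', rfl, rfl, hxx, le_rfl⟩

theorem histStep_push_of_take_ne {p : List ℕ}
    (h : p.take (n - r + 1) ≠ topAddr s (n - r) ++ [sizeAt s (topAddr s (n - r))]) :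
    histStep n (Op.push r γ) s p = p := by
  rw [histStep_push, if_neg h]

theorem histStep_push_append_cons (hv : IsValid n s) (ρ : List ℕ) :
    histStep n (Op.push r γ) s (topAddr s (n - r) ++ sizeAt s (topAddr s (n - r)) :: ρ) =
      topAddr s (n - r) ++ (sizeAt s (topAddr s (n - r)) - 1) :: ρ := by
  have hlen := topAddr_length hv (Nat.sub_le n r)
  rw [histStep_push, if_pos (by simp [List.take_append, hlen])]
  simp [hlen]

theorem isSome_sub?_histStep_push (hv : IsValid n s) (hpush : pushOp n r γ s = some s')
    {p : List ℕ} (hp : (sub? s' p).isSome) :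
    (sub? s (histStep n (Op.push r γ) s p)).isSome := by
  obtain ⟨l, t, t', hsub, hlget, hss, hsub'⟩ := pushOp_spec hpush
  by_cases hmatch : p.take (n - r + 1) = topAddr s (n - r) ++ [sizeAt s (topAddr s (n - r))]
  · obtain ⟨ρ, rfl⟩ : topAddr s (n - r) ++ [sizeAt s (topAddr s (n - r))] <+: p :=
      hmatch ▸ List.take_prefix _ p
    simp only [List.append_assoc, List.singleton_append] at hp ⊢
    rw [histStep_push_append_cons hv, sizeAt_eq_length hsub, sub?_append_cons hsub hlget,
      hss.sub?_isSome]
    rwa [sizeAt_eq_length hsub, sub?_append_cons hsub' List.getElem?_concat_length] at hp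
  · rw [histStep_push_of_take_ne hmatch]
    by_cases hpta : p = topAddr s (n - r)
    · rw [hpta, hsub]
      rfl
    · rw [sizeAt_eq_length hsub] at hmatch
      exact (pushOp_isSome_sizeAt hv hpush hsub hsub' hpta hmatch hp).1

end HistStep

namespace Run

variable {n : ℕ} {A Γ : Type} {D : DPDA n A Γ} (R : Run D)

theorem step_cases {i : ℕ} (hi : i < R.len) :
    IsValid n (R.cfg i).2 ∧
      ((R.stepHist i = id ∧ (R.cfg (i + 1)).2 = (R.cfg i).2) ∨
        (∃ r, r ≤ n ∧ R.stepHist i = id ∧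
          popOp n r (R.cfg i).2 = some (R.cfg (i + 1)).2) ∨
        (∃ r γ, r ≤ n ∧ R.stepHist i = histStep n (Op.push r γ) (R.cfg i).2 ∧
          pushOp n r γ (R.cfg i).2 = some (R.cfg (i + 1)).2)) := by
  have h := R.ok i hi
  unfold stepHist
  generalize R.cfg i = c, R.cfg (i + 1) = c', R.lab i = a at h ⊢
  cases h with
  | read a hval htop hδ => exact ⟨hval, Or.inl ⟨by simp only [htop, hδ], rfl⟩⟩
  | op hval htop hδ happ =>
    refine ⟨hval, Or.inr ?_⟩
    simp only [htop, hδ]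
    rename_i o
    cases o with
    | pop r =>
      simp only [applyOp] at happ
      split_ifs at happ with hr
      exact Or.inl ⟨r, hr.2, rfl, happ⟩
    | push r γ =>
      simp only [applyOp] at happ
      split_ifs at happ with hr
      exact Or.inr ⟨r, γ, hr.2, rfl, happ⟩

theorem isValid_cfg_succ {i : ℕ} (hi : i < R.len) : IsValid n (R.cfg (i + 1)).2 := by
  obtain ⟨hv, ⟨-, hsame⟩ | ⟨r, -, -, hpop⟩ | ⟨r, γ, -, -, hpush⟩⟩ :=
    R.step_cases hi
  · rwa [hsame]
  · exact hv.popOp hpop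
  · exact hv.pushOp hpush

theorem isValid_cfg (hpos : 0 < R.len) {i : ℕ} (hi : i ≤ R.len) : IsValid n (R.cfg i).2 := by
  rcases hi.lt_or_eq with hlt | rfl
  · exact (R.step_cases hlt).1
  · have := R.isValid_cfg_succ (Nat.sub_lt hpos one_pos)
    rwa [Nat.sub_add_cancel (Nat.one_le_of_lt hpos)] at this

theorem histTo_succ (i j : ℕ) (p : List ℕ) :
    R.histTo i (j + 1) p = if j + 1 ≤ i then p else R.histTo i j (R.stepHist j p) := rfl

theorem histTo_of_le {i j : ℕ} (h : j ≤ i) (p : List ℕ) : R.histTo i j p = p := by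
  cases j with
  | zero => rfl
  | succ j => rw [histTo_succ, if_pos h]

theorem histTo_comp {i j l : ℕ} (hij : i ≤ j) (hjl : j ≤ l) (p : List ℕ) :
    R.histTo i l p = R.histTo i j (R.histTo j l p) := by
  induction l generalizing p with
  | zero =>
    obtain rfl : j = 0 := by omega
    rfl
  | succ l ih =>
    rcases hjl.lt_or_eq with hjl | rfl
    · rw [histTo_succ, if_neg (by omega), histTo_succ _ j, if_neg (by omega)]
      exact ih (by omega) _
    · rw [R.histTo_of_le le_rfl]

theorem histTo_step {i l : ℕ} (h : i < l) (p : List ℕ) :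
    R.histTo i l p = R.stepHist i (R.histTo (i + 1) l p) := by
  rw [R.histTo_comp (Nat.le_succ i) h p, histTo_succ, if_neg (by omega),
    R.histTo_of_le le_rfl]

theorem histTo_sub (i L d : ℕ) (p : List ℕ) :
    (R.sub i L).histTo 0 d p = R.histTo i (i + d) p := by
  induction d generalizing p with
  | zero => exact (R.histTo_of_le le_rfl p).symm
  | succ d ih =>
    rw [histTo_succ, if_neg (by omega), ih, ← Nat.add_assoc, histTo_succ, if_neg (by omega)]
    rfl

theorem isUpper_sub_iff {i l : ℕ} (hil : i ≤ l) (hl : l ≤ R.len) (k : ℕ) :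
    (R.sub i l).IsUpper k ↔
      R.histTo i l (topAddr (R.cfg l).2 (n - k)) = topAddr (R.cfg i).2 (n - k) := by
  show (R.sub i l).histTo 0 (min l R.len - i)
      (topAddr (R.cfg (i + (min l R.len - i))).2 (n - k)) = topAddr (R.cfg (i + 0)).2 (n - k) ↔ _
  rw [min_eq_left hl, histTo_sub, Nat.add_sub_cancel' hil, Nat.add_zero]

variable {R}

theorem stepHist_take {i : ℕ} (hi : i < R.len) (p : List ℕ) (d : ℕ) :
    (R.stepHist i p).take d = R.stepHist i (p.take d) := by
  obtain ⟨hv, ⟨hid, -⟩ | ⟨r, -, hid, -⟩ | ⟨r, γ, -, hh, -⟩⟩ := R.step_cases hi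
  · rw [hid]; rfl
  · rw [hid]; rfl
  · rw [hh, histStep_take hv]

theorem isSome_sub?_stepHist {i : ℕ} (hi : i < R.len) {p : List ℕ}
    (hp : (sub? (R.cfg (i + 1)).2 p).isSome) : (sub? (R.cfg i).2 (R.stepHist i p)).isSome := by
  obtain ⟨hv, ⟨hid, hsame⟩ | ⟨r, -, hid, hpop⟩ | ⟨r, γ, -, hh, hpush⟩⟩ :=
    R.step_cases hi
  · rw [hid, ← hsame]; exact hp
  · rw [hid]; exact isSome_sub?_of_popOp hpop hp
  · rw [hh]; exact isSome_sub?_histStep_push hv hpush hp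

theorem stepHist_snoc_mono {i : ℕ} (hi : i < R.len) {w : List ℕ} {x x' : ℕ} (hxx : x ≤ x')
    (hp : (sub? (R.cfg (i + 1)).2 (w ++ [x'])).isSome) :
    ∃ v y y', R.stepHist i (w ++ [x]) = v ++ [y] ∧ R.stepHist i (w ++ [x']) = v ++ [y'] ∧
      y ≤ y' ∧ y' - y ≤ x' - x := by
  obtain ⟨hv, ⟨hid, -⟩ | ⟨r, -, hid, -⟩ | ⟨r, γ, -, hh, hpush⟩⟩ := R.step_cases hi
  · rw [hid]; exact ⟨w, x, x', rfl, rfl, hxx, le_rfl⟩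
  · rw [hid]; exact ⟨w, x, x', rfl, rfl, hxx, le_rfl⟩
  · rw [hh]; exact histStep_push_snoc_mono hv hpush hxx hp

theorem histTo_take {i l : ℕ} (hl : l ≤ R.len) (p : List ℕ) (d : ℕ) :
    (R.histTo i l p).take d = R.histTo i l (p.take d) := by
  induction l generalizing p with
  | zero => rfl
  | succ l ih =>
    rw [histTo_succ, histTo_succ]
    split_ifs
    · rfl
    · rw [ih (by omega), stepHist_take (by omega)]

theorem isSome_sub?_histTo {i l : ℕ} (hil : i ≤ l) (hl : l ≤ R.len) {p : List ℕ}
    (hp : (sub? (R.cfg l).2 p).isSome) : (sub? (R.cfg i).2 (R.histTo i l p)).isSome := by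
  induction hil using Nat.decreasingInduction with
  | self => rwa [R.histTo_of_le le_rfl]
  | of_succ k hk ih => rw [R.histTo_step hk]; exact isSome_sub?_stepHist (by omega) ih

theorem histTo_snoc_mono {i l : ℕ} (hil : i ≤ l) (hl : l ≤ R.len) {w : List ℕ} {x x' : ℕ}
    (hxx : x ≤ x') (hp : (sub? (R.cfg l).2 (w ++ [x'])).isSome) :
    ∃ v y y', R.histTo i l (w ++ [x]) = v ++ [y] ∧ R.histTo i l (w ++ [x']) = v ++ [y'] ∧
      y ≤ y' ∧ y' - y ≤ x' - x := by
  induction hil using Nat.decreasingInduction with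
  | self =>
    rw [R.histTo_of_le le_rfl, R.histTo_of_le le_rfl]
    exact ⟨w, x, x', rfl, rfl, hxx, le_rfl⟩
  | of_succ k hk ih =>
    obtain ⟨v, y, y', e1, e2, hyy, hgap⟩ := ih
    have hv' : (sub? (R.cfg (k + 1)).2 (v ++ [y'])).isSome :=
      e2 ▸ isSome_sub?_histTo hk hl hp
    obtain ⟨v₂, z, z', f1, f2, hzz, hgap₂⟩ := stepHist_snoc_mono (by omega) hyy hv'
    rw [R.histTo_step hk, R.histTo_step hk, e1, e2]
    exact ⟨v₂, z, z', f1, f2, hzz, hgap₂.trans hgap⟩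

end Run

section Origins

variable {Γ : Type} {n k r : ℕ} {s s' : St Γ}

/-- The address of `top^(k-1) (pop^k s)`. -/
def popTopAddr (n : ℕ) (s : St Γ) (k : ℕ) : List ℕ :=
  topAddr s (n - k) ++ [sizeAt s (topAddr s (n - k)) - 2]

/-- `p` is the address of the topmost `(k-1)`-stack of a `k`-stack of `s` other than `top^k s`. -/
def IsOtherTopAddr (n : ℕ) (s : St Γ) (k : ℕ) (p : List ℕ) : Prop :=
  ∃ w x, p = w ++ [x] ∧ w.length = n - k ∧ w ≠ topAddr s (n - k) ∧ x + 1 = sizeAt s w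

def IsTopOrigin (n : ℕ) (s : St Γ) (k : ℕ) (p : List ℕ) : Prop :=
  p = topAddr s (n - k + 1) ∨ p = popTopAddr n s k ∨ IsOtherTopAddr n s k p

theorem popOp_topAddr_succ (hv : IsValid n s) (hk1 : 1 ≤ k) (hkn : k ≤ n) (hrn : r ≤ n)
    (hpop : popOp n r s = some s') :
    IsTopOrigin n s k (topAddr s' (n - k + 1)) := by
  have hv' := hv.popOp hpop
  obtain ⟨l, hsub, hl2, hsub'⟩ := popOp_spec hpop
  have hsz : sizeAt s (topAddr s (n - r)) = l.length := sizeAt_eq_length hsub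
  have hsz' : sizeAt s' (topAddr s (n - r)) = l.length - 1 := by
    rw [sizeAt_eq_length hsub', List.length_dropLast]
  have hspine {d : ℕ} (hd : d ≤ n - r) := topAddr_modAt hv hv' (Nat.sub_le n r) hpop hd
  rcases lt_trichotomy r k with hrk | rfl | hrk
  · exact Or.inl (hspine (by omega))
  · refine Or.inr (Or.inl ?_)
    rw [topAddr_succ hv' (by omega), hspine le_rfl, hsz', popTopAddr, hsz]
    rfl
  · refine Or.inr (Or.inr ⟨topAddr s' (n - k), _, topAddr_succ hv' (by omega),
      topAddr_length hv' (by omega), fun hc => ?_, ?_⟩)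
    · have := congrArg (·[n - r]?) hc
      rw [topAddr_getElem? hv' (by omega) (by omega), topAddr_getElem? hv (by omega) (by omega),
        hspine le_rfl, hsz, hsz', Option.some.injEq] at this
      omega
    · obtain ⟨u, hu, -⟩ := hv'.exists_sub?_topAddr (show n - k ≤ n by omega)
      have hne : topAddr s' (n - k) ≠ topAddr s (n - r) := ne_of_length_ne (by
        rw [topAddr_length hv' (by omega), topAddr_length hv (by omega)]
        omega)
      rw [(popOp_isSome_sizeAt hpop hne (by rw [hu]; rfl)).2]
      have := one_le_sizeAt_topAddr hv' (show n - k < n by omega)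
      omega

theorem IsOtherTopAddr.of_popOp (hv : IsValid n s) (hkn : k ≤ n) (hrn : r ≤ n)
    (hpop : popOp n r s = some s') {p : List ℕ} (hp : (sub? s' p).isSome)
    (h : IsOtherTopAddr n s' k p) : IsOtherTopAddr n s k p := by
  have hv' := hv.popOp hpop
  obtain ⟨w, x, rfl, hwlen, hwne, hwsz⟩ := h
  have hvw : (sub? s' w).isSome := isSome_sub?_of_append hp
  refine ⟨w, x, rfl, hwlen, ?_, ?_⟩
  · by_cases hkr : r ≤ k
    · rwa [← topAddr_modAt hv hv' (Nat.sub_le n r) hpop (by omega : n - k ≤ n - r)]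
    · rintro rfl
      obtain ⟨l, hsub, -, hsub'⟩ := popOp_spec hpop
      obtain ⟨ρ, hρ⟩ := topAddr_eq_append_cons hv (show n - r < n - k by omega) (by omega)
      rw [hρ, sizeAt_eq_length hsub, sub?_append, hsub', Option.bind_some, sub?_node,
        List.getElem?_eq_none (by simp)] at hvw
      exact Bool.false_ne_true hvw
  · have hwa : w ≠ topAddr s (n - r) := by
      by_cases hrk : r = k
      · subst hrk
        rwa [← topAddr_modAt hv hv' (Nat.sub_le n r) hpop le_rfl]
      · exact ne_of_length_ne (by rw [hwlen, topAddr_length hv (Nat.sub_le n r)]; omega)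
    rw [(popOp_isSome_sizeAt hpop hwa hvw).2]
    exact hwsz

end Origins

section PushOrigins

variable {Γ : Type} {n k r : ℕ} {γ : Γ} {s s' : St Γ}

theorem histStep_push_topAddr_succ (hv : IsValid n s) (hk1 : 1 ≤ k) (hkn : k ≤ n)
    (hpush : pushOp n r γ s = some s') :
    histStep n (Op.push r γ) s (topAddr s' (n - k + 1)) = topAddr s (n - k + 1) := by
  have hv' := hv.pushOp hpush
  by_cases hrk : r < k
  · rw [topAddr_modAt hv hv' (Nat.sub_le n r) hpush (by omega),
      histStep_push_of_length_le hv (by rw [topAddr_length hv (by omega)]; omega)]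
  · obtain ⟨l, t, t', hsub, hlget, hss, hsub'⟩ := pushOp_spec hpush
    obtain ⟨h1, h2⟩ := pushOp_topAddr hv hpush hlget hss hsub hsub'
      (show n - r < n - k + 1 by omega) (by omega)
    rw [h2, h1, ← sizeAt_eq_length hsub, histStep_push_append_cons hv]

theorem IsOtherTopAddr.of_pushOp_of_le (hv : IsValid n s) (hkn : k ≤ n) (hrk : r ≤ k)
    (hpush : pushOp n r γ s = some s') {p : List ℕ} (hp : (sub? s' p).isSome)
    (h : IsOtherTopAddr n s' k p) :
    histStep n (Op.push r γ) s p = p ∧ IsOtherTopAddr n s k p := by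
  have hv' := hv.pushOp hpush
  obtain ⟨l, t, t', hsub, -, -, hsub'⟩ := pushOp_spec hpush
  have hlen := topAddr_length hv (Nat.sub_le n r)
  obtain ⟨w, x, rfl, hwlen, hwne, hwsz⟩ := h
  have hwne' : w ≠ topAddr s (n - k) := by
    rwa [← topAddr_modAt hv hv' (Nat.sub_le n r) hpush (by omega : n - k ≤ n - r)]
  have hwa : w ≠ topAddr s (n - r) := by
    rcases hrk.lt_or_eq with hrk | rfl
    · exact ne_of_length_ne (by omega)
    · exact hwne'
  have hpt : (w ++ [x]).take (n - r + 1) ≠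
      topAddr s (n - r) ++ [sizeAt s (topAddr s (n - r))] := by
    rcases hrk.lt_or_eq with hrk | rfl
    · exact ne_of_length_ne (by simp; omega)
    · rw [List.take_of_length_le (by simp; omega)]
      exact fun hc => hwa (List.append_inj hc (by omega)).1
  have hwt : w.take (n - r + 1) ≠ topAddr s (n - r) ++ [l.length] :=
    ne_of_length_ne (by simp; omega)
  refine ⟨histStep_push_of_take_ne hpt, w, x, rfl, hwlen, hwne', ?_⟩
  rw [(pushOp_isSome_sizeAt hv hpush hsub hsub' hwa hwt (isSome_sub?_of_append hp)).2]
  exact hwsz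

theorem isOtherTopAddr_histStep_push_copy (hv : IsValid n s) (hkr : k < r) (hrn : r ≤ n)
    (hpush : pushOp n r γ s = some s') {ρ : List ℕ} (x : ℕ)
    (hlen : (topAddr s (n - r) ++ sizeAt s (topAddr s (n - r)) :: ρ).length = n - k)
    (hne : topAddr s (n - r) ++ sizeAt s (topAddr s (n - r)) :: ρ ≠ topAddr s' (n - k))
    (hsz : x + 1 = sizeAt s' (topAddr s (n - r) ++ sizeAt s (topAddr s (n - r)) :: ρ)) :
    IsOtherTopAddr n s k (histStep n (Op.push r γ) s
      (topAddr s (n - r) ++ sizeAt s (topAddr s (n - r)) :: (ρ ++ [x]))) := by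
  obtain ⟨l, t, t', hsub, hlget, hss, hsub'⟩ := pushOp_spec hpush
  obtain ⟨hT, hT'⟩ := pushOp_topAddr hv hpush hlget hss hsub hsub'
    (show n - r < n - k by omega) (by omega)
  have hl := sizeAt_eq_length hsub
  rw [histStep_push_append_cons hv]
  refine ⟨topAddr s (n - r) ++ (sizeAt s (topAddr s (n - r)) - 1) :: ρ, x, by simp,
    by simpa using hlen, fun hc => hne ?_, ?_⟩
  · rw [hT, hl] at hc
    rw [hT', hl, (List.cons.inj (List.append_cancel_left hc)).2]
  · rw [sizeAt_congr (sub?_append_cons hsub (hl ▸ hlget) ρ), hss.sizeAt_eq,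
      ← sizeAt_congr (sub?_append_cons hsub' List.getElem?_concat_length ρ), ← hl]
    exact hsz

theorem IsOtherTopAddr.of_pushOp_of_lt (hv : IsValid n s) (hk1 : 1 ≤ k) (hkr : k < r)
    (hrn : r ≤ n) (hpush : pushOp n r γ s = some s') {p : List ℕ} (hp : (sub? s' p).isSome)
    (h : IsOtherTopAddr n s' k p) :
    histStep n (Op.push r γ) s p = topAddr s (n - k + 1) ∨
      IsOtherTopAddr n s k (histStep n (Op.push r γ) s p) := by
  obtain ⟨l, t, t', hsub, hlget, hss, hsub'⟩ := pushOp_spec hpush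
  have hl := sizeAt_eq_length hsub
  obtain ⟨w, x, rfl, hwlen, hwne, hwsz⟩ := h
  by_cases hmatch : w.take (n - r + 1) = topAddr s (n - r) ++ [sizeAt s (topAddr s (n - r))]
  · obtain ⟨ρ, rfl⟩ : _ <+: w := hmatch ▸ List.take_prefix _ w
    simp only [List.append_assoc, List.cons_append, List.nil_append] at hwlen hwne hwsz ⊢
    exact Or.inr (isOtherTopAddr_histStep_push_copy hv hkr hrn hpush x hwlen hwne hwsz)
  rw [histStep_push_of_take_ne (by rwa [List.take_append_of_le_length (by omega)])]
  by_cases hw : w = topAddr s (n - k)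
  · obtain ⟨hT, -⟩ := pushOp_topAddr hv hpush hlget hss hsub hsub'
      (show n - r < n - k by omega) (by omega)
    have hold : sub? s' w = sub? s w := by
      rw [hw, hT, sub?_append_cons hsub hlget, sub?_append_cons hsub'
        (by rwa [List.getElem?_append_left (List.getElem?_eq_some_iff.mp hlget).1])]
    left
    rw [topAddr_succ hv (by omega), ← hw, ← sizeAt_congr hold, ← hwsz]
    rfl
  · have hwa : w ≠ topAddr s (n - r) := ne_of_length_ne (by
      rw [hwlen, topAddr_length hv (Nat.sub_le n r)]
      omega)
    rw [hl] at hmatch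
    refine Or.inr ⟨w, x, rfl, hwlen, hw, ?_⟩
    rw [(pushOp_isSome_sizeAt hv hpush hsub hsub' hwa hmatch (isSome_sub?_of_append hp)).2]
    exact hwsz

end PushOrigins

namespace Run

variable {n : ℕ} {A Γ : Type} {D : DPDA n A Γ} {R : Run D} {k : ℕ}

theorem isTopOrigin_stepHist (hk1 : 1 ≤ k) (hkn : k ≤ n) {i : ℕ} (hi : i < R.len)
    {p : List ℕ} (hp : (sub? (R.cfg (i + 1)).2 p).isSome)
    (h : p = topAddr (R.cfg (i + 1)).2 (n - k + 1) ∨ IsOtherTopAddr n (R.cfg (i + 1)).2 k p) :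
    IsTopOrigin n (R.cfg i).2 k (R.stepHist i p) := by
  obtain ⟨hv, ⟨hid, hsame⟩ | ⟨r, hrn, hid, hpop⟩ | ⟨r, γ, hrn, hh, hpush⟩⟩ :=
    R.step_cases hi
  · rw [hid, id]
    rw [hsame] at h
    exact h.imp_right Or.inr
  · rw [hid]
    rcases h with rfl | h
    · exact popOp_topAddr_succ hv hk1 hkn hrn hpop
    · exact Or.inr (Or.inr (h.of_popOp hv hkn hrn hpop hp))
  · rw [hh]
    rcases h with rfl | h
    · exact Or.inl (histStep_push_topAddr_succ hv hk1 hkn hpush)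
    rcases le_or_gt r k with hrk | hkr
    · obtain ⟨heq, h'⟩ := h.of_pushOp_of_le hv hkn hrk hpush hp
      rw [heq]
      exact Or.inr (Or.inr h')
    · exact (h.of_pushOp_of_lt hv hk1 hkr hrn hpush hp).imp_right Or.inr

theorem histTo_topAddr_eq_take (hk1 : 1 ≤ k) (hkn : k ≤ n) {i l : ℕ} (hl : l ≤ R.len)
    (hvl : IsValid n (R.cfg l).2) :
    R.histTo i l (topAddr (R.cfg l).2 (n - k)) =
      (R.histTo i l (topAddr (R.cfg l).2 (n - k + 1))).take (n - k) := by
  rw [R.histTo_take hl, topAddr_take hvl (Nat.le_succ _) (by omega)]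

end Run

namespace Run

variable {n : ℕ} {A Γ : Type} {D : DPDA n A Γ} {R : Run D} {k : ℕ}

theorem isUpper_iff (R : Run D) (k : ℕ) :
    R.IsUpper k ↔
      R.histTo 0 R.len (topAddr (R.cfg R.len).2 (n - k)) = topAddr (R.cfg 0).2 (n - k) :=
  Iff.rfl

def IsLastUpperSuffix (R : Run D) (k j : ℕ) : Prop :=
  j < R.len ∧ (R.sub j R.len).IsUpper k ∧
    ∀ j', j < j' → j' < R.len → ¬ (R.sub j' R.len).IsUpper k

theorem isTopOrigin_histTo (hk1 : 1 ≤ k) (hkn : k ≤ n) {j : ℕ}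
    (hj : R.IsLastUpperSuffix k j) :
    IsTopOrigin n (R.cfg j).2 k (R.histTo j R.len (topAddr (R.cfg R.len).2 (n - k + 1))) := by
  obtain ⟨hj, -, hjmax⟩ := hj
  have hpos : 0 < R.len := by omega
  have hvE := R.isValid_cfg hpos le_rfl
  refine Nat.decreasingInduction' (fun i hi hji ih => ?_) hj.le (Or.inl (R.histTo_of_le le_rfl _))
  rw [R.histTo_step hi]
  refine isTopOrigin_stepHist hk1 hkn hi
    (R.isSome_sub?_histTo (by omega) le_rfl (hvE.isSome_sub?_topAddr (by omega))) ?_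
  rcases (i + 1).lt_or_ge R.len with hlt | hge
  · rcases ih with h | h | h
    · exact Or.inl h
    · refine absurd ((R.isUpper_sub_iff (by omega) le_rfl k).mpr ?_) (hjmax (i + 1) (by omega) hlt)
      rw [histTo_topAddr_eq_take hk1 hkn le_rfl hvE, h, popTopAddr,
        List.take_left' (topAddr_length (R.isValid_cfg hpos hlt.le) (by omega))]
    · exact Or.inr h
  · have he : i + 1 = R.len := by omega
    left
    rw [he, R.histTo_of_le le_rfl]

theorem histTo_eq_popTopAddr (hk1 : 1 ≤ k) (hkn : k ≤ n) (hnot : ¬ R.IsUpper (k - 1))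
    {j : ℕ} (hj : R.IsLastUpperSuffix k j) (hpre : (R.sub 0 j).IsUpper (k - 1)) :
    R.histTo j R.len (topAddr (R.cfg R.len).2 (n - k + 1)) = popTopAddr n (R.cfg j).2 k := by
  have hb : n - (k - 1) = n - k + 1 := by omega
  rw [R.isUpper_sub_iff (Nat.zero_le _) hj.1.le, hb] at hpre
  rcases isTopOrigin_histTo hk1 hkn hj with h | h | ⟨w, x, hPw, hwlen, hwne, -⟩
  · refine absurd ?_ hnot
    rw [isUpper_iff, hb, R.histTo_comp (Nat.zero_le _) hj.1.le, h, hpre]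
  · exact h
  · refine absurd ?_ hwne
    have hjup := (R.isUpper_sub_iff hj.1.le le_rfl k).mp hj.2.1
    rwa [histTo_topAddr_eq_take hk1 hkn le_rfl (R.isValid_cfg (Nat.zero_lt_of_lt hj.1) le_rfl), hPw,
      List.take_left' hwlen] at hjup

theorem histTo_popTopAddr_snoc (hk1 : 1 ≤ k) (hkn : k ≤ n) {i l : ℕ} (hil : i ≤ l)
    (hl : l ≤ R.len) (hvl : IsValid n (R.cfg l).2) :
    ∃ v y y', R.histTo i l (popTopAddr n (R.cfg l).2 k) = v ++ [y] ∧
      R.histTo i l (topAddr (R.cfg l).2 (n - k + 1)) = v ++ [y'] ∧ y ≤ y' ∧ y' ≤ y + 1 := by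
  have hval := hvl.isSome_sub?_topAddr (show n - k + 1 ≤ n by omega)
  rw [topAddr_succ hvl (by omega)] at hval ⊢
  obtain ⟨v, y, y', h1, h2, hyy, hgap⟩ := R.histTo_snoc_mono hil hl
    (x := sizeAt (R.cfg l).2 (topAddr (R.cfg l).2 (n - k)) - 2) (by omega) hval
  exact ⟨v, y, y', h1, h2, hyy, by omega⟩

theorem histTo_popTopAddr_of_isUpper (hk1 : 1 ≤ k) (hkn : k ≤ n) {i l : ℕ} (hil : i ≤ l)
    (hl : l ≤ R.len) (hvl : IsValid n (R.cfg l).2) (hvi : IsValid n (R.cfg i).2)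
    (hup : R.histTo i l (topAddr (R.cfg l).2 (n - k + 1)) = topAddr (R.cfg i).2 (n - k + 1))
    (hne : R.histTo i l (popTopAddr n (R.cfg l).2 k) ≠ topAddr (R.cfg i).2 (n - k + 1)) :
    R.histTo i l (popTopAddr n (R.cfg l).2 k) = popTopAddr n (R.cfg i).2 k := by
  obtain ⟨v, y, y', h1, h2, hyy, hgap⟩ := histTo_popTopAddr_snoc hk1 hkn hil hl hvl
  rw [hup, topAddr_succ hvi (by omega)] at h2
  obtain ⟨rfl, hy'⟩ := List.append_inj' h2 rfl
  have hy'' := List.singleton_inj.mp hy'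
  rw [h1, topAddr_succ hvi (by omega)] at hne
  have hy : y ≠ sizeAt (R.cfg i).2 (topAddr (R.cfg i).2 (n - k)) - 1 := fun h => hne (by rw [h])
  rw [h1, popTopAddr, show y = sizeAt (R.cfg i).2 (topAddr (R.cfg i).2 (n - k)) - 2 by omega]

theorem histTo_topAddr_of_popTopAddr (hk1 : 1 ≤ k) (hkn : k ≤ n) {i l : ℕ} (hil : i ≤ l)
    (hl : l ≤ R.len) (hvl : IsValid n (R.cfg l).2) (hvi : IsValid n (R.cfg i).2)
    (h : R.histTo i l (popTopAddr n (R.cfg l).2 k) = topAddr (R.cfg i).2 (n - k + 1)) :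
    R.histTo i l (topAddr (R.cfg l).2 (n - k + 1)) = topAddr (R.cfg i).2 (n - k + 1) := by
  obtain ⟨v, y, y', h1, h2, hyy, -⟩ := histTo_popTopAddr_snoc hk1 hkn hil hl hvl
  have hval : (sub? (R.cfg i).2 (v ++ [y'])).isSome :=
    h2 ▸ R.isSome_sub?_histTo hil hl (hvl.isSome_sub?_topAddr (by omega))
  rw [h, topAddr_succ hvi (by omega)] at h1
  obtain ⟨rfl, hy⟩ := List.append_inj' h1 rfl
  obtain ⟨l', hl', hlt⟩ := isSome_sub?_snoc_iff.mp hval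
  rw [h2, topAddr_succ hvi (by omega), sizeAt_eq_length hl']
  rw [sizeAt_eq_length hl'] at hy
  have := List.singleton_inj.mp hy
  rw [show y' = l'.length - 1 by omega]

theorem histTo_zero_eq_popTopAddr (hk1 : 1 ≤ k) (hkn : k ≤ n) (hnot : ¬ R.IsUpper (k - 1))
    {j : ℕ} (hj : R.IsLastUpperSuffix k j) (hpre : (R.sub 0 j).IsUpper (k - 1)) :
    R.histTo 0 R.len (topAddr (R.cfg R.len).2 (n - k + 1)) = popTopAddr n (R.cfg 0).2 k := by
  have hb : n - (k - 1) = n - k + 1 := by omega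
  have hpos := Nat.zero_lt_of_lt hj.1
  have hB := histTo_eq_popTopAddr hk1 hkn hnot hj hpre
  rw [R.isUpper_sub_iff (Nat.zero_le _) hj.1.le, hb] at hpre
  rw [R.histTo_comp (Nat.zero_le _) hj.1.le, hB]
  refine histTo_popTopAddr_of_isUpper hk1 hkn (Nat.zero_le _) hj.1.le
    (R.isValid_cfg hpos hj.1.le) (R.isValid_cfg hpos (Nat.zero_le _)) hpre fun h => hnot ?_
  rw [isUpper_iff, hb, R.histTo_comp (Nat.zero_le _) hj.1.le, hB, h]

theorem not_isUpper_sub (hk1 : 1 ≤ k) (hkn : k ≤ n) (hnot : ¬ R.IsUpper (k - 1))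
    {j : ℕ} (hj : R.IsLastUpperSuffix k j) (hpre : (R.sub 0 j).IsUpper (k - 1)) :
    ∀ i < R.len, ¬ (R.sub i R.len).IsUpper (k - 1) := by
  intro i hi hup
  have hb : n - (k - 1) = n - k + 1 := by omega
  have hpos := Nat.zero_lt_of_lt hi
  have hvi := R.isValid_cfg hpos hi.le
  rw [R.isUpper_sub_iff hi.le le_rfl, hb] at hup
  have hB := histTo_eq_popTopAddr hk1 hkn hnot hj hpre
  rw [R.isUpper_sub_iff (Nat.zero_le _) hj.1.le, hb] at hpre
  rcases lt_trichotomy i j with hij | rfl | hji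
  · have hij' := histTo_topAddr_of_popTopAddr hk1 hkn hij.le hj.1.le
      (R.isValid_cfg hpos hj.1.le) hvi (by rwa [R.histTo_comp hij.le hj.1.le, hB] at hup)
    apply hnot
    rw [isUpper_iff, hb, R.histTo_comp (Nat.zero_le i) hi.le, hup, ← hij',
      ← R.histTo_comp (Nat.zero_le i) hij.le, hpre]
  · apply hnot
    rw [isUpper_iff, hb, R.histTo_comp (Nat.zero_le i) hi.le, hup, hpre]
  · refine hj.2.2 i hji hi ((R.isUpper_sub_iff hi.le le_rfl k).mpr ?_)
    rw [histTo_topAddr_eq_take hk1 hkn le_rfl (R.isValid_cfg hpos le_rfl), hup,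
      topAddr_take hvi (Nat.le_succ _) (by omega)]

end Run

theorem statement7_general {n : ℕ} {A Γ : Type}
    {D : DPDA n A Γ} (k : ℕ) (hk1 : 1 ≤ k) (hk : k ≤ n) (R : Run D)
    (hnot : ¬ R.IsUpper (k - 1)) (j : ℕ) (hj : j < R.len)
    (hjup : (R.sub j R.len).IsUpper k)
    (hjmax : ∀ j', j < j' → j' < R.len → ¬ (R.sub j' R.len).IsUpper k)
    (hpre : (R.sub 0 j).IsUpper (k - 1)) :
    R.IsReturn k := by
  have hlast : R.IsLastUpperSuffix k j := ⟨hj, hjup, hjmax⟩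
  refine ⟨?_, Run.not_isUpper_sub hk1 hk hnot hlast hpre⟩
  rw [show n - (k - 1) = n - k + 1 by omega]
  exact Run.histTo_zero_eq_popTopAddr hk1 hk hnot hlast hpre

/-- Let `1 ≤ k ≤ n` and let `R` be a run of an `n`-DPDA that is not
`(k-1)`-upper.  Suppose the greatest index `j ∈ [0,|R|-1]` such that `R[j,|R|]` is
`k`-upper exists, and the prefix `R[0,j]` is `(k-1)`-upper.  Then `R` is a `k`-return. -/
theorem statement7 {n : ℕ} (hn : 1 ≤ n) {A Γ : Type} [Finite A] [Finite Γ]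
    {D : DPDA n A Γ} (k : ℕ) (hk1 : 1 ≤ k) (hk : k ≤ n) (R : Run D)
    (hnot : ¬ R.IsUpper (k - 1)) (j : ℕ) (hj : j < R.len)
    (hjup : (R.sub j R.len).IsUpper k)
    (hjmax : ∀ j', j < j' → j' < R.len → ¬ (R.sub j' R.len).IsUpper k)
    (hpre : (R.sub 0 j).IsUpper (k - 1)) :
    R.IsReturn k :=
  statement7_general k hk1 hk R hnot j hj hjup hjmax hpre

end HOPDA
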